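/- In a linear structural equation model X = AX + u with A strictly lower triangular, each variable X_i admits the ancestral expansion: for any subset S of the variables excluding X_i, X_i = Σ_{X_j ∈ S} τ_{ij|do(S\{X_j})} X_j + Σ_{X_k ∈ AN(X_i)\S} τ_{ik|do(S)} u_k + u_i, where τ_{ij|do(Z)} denotes the Z-controlled total effect (the sum over directed paths from X_j to X_i avoiding edges into Z of the products of path coefficients). -/

import Mathlib

/-!
Write `B` for `A` with the rows in `S` cleared. The structural equations give
`(1 - B) X = w` with `w k = X k` for `k ∈ S` and `w k = u k` otherwise, so
`X i = Σ k, τ_{ik|do(S)} w k`. Since `B` is strictly lower triangular,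
`(1 - B)⁻¹ = 1 + B (1 - B)⁻¹` is unit lower triangular and, by induction along the order,
nonzero only on pairs joined by a directed path: this turns the terms with `k ∉ S` into the
ancestral noise terms and `u i`. Finally, column `j` of `(1 - B)⁻¹` does not see row `j`
of `B`, so `τ_{ij|do(S)} = τ_{ij|do(S \ {j})}`.
-/

open scoped Classical

/-- The `Z`-controlled total effect of `X j` on `X i`: the `(i,j)` entry of `(I - A_Z)⁻¹`
where `A_Z` deletes all edges whose head lies in `Z` (sum over directed paths from `j` to
`i` avoiding edges into `Z` of the products of path coefficients). -/
noncomputable def ctrlEffect {N : ℕ} (A : Matrix (Fin N) (Fin N) ℝ)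
    (Z : Set (Fin N)) (i j : Fin N) : ℝ :=
  (1 - Matrix.of fun a b => if a ∈ Z then (0 : ℝ) else A a b)⁻¹ i j

open Relation
open scoped Matrix

theorem transGen_lt_of_strictLower {n R : Type*} [LinearOrder n] [Zero R] {B : Matrix n n R}
    (hB : ∀ i j, i ≤ j → B i j = 0) {a b : n} (h : TransGen (fun a b => B b a ≠ 0) a b) :
    a < b := by
  induction h with
  | single hab => exact not_le.mp (mt (hB _ _) hab)
  | tail _ hbc ih => exact ih.trans (not_le.mp (mt (hB _ _) hbc))

section StrictLowerTriangular

variable {n R : Type*} [Fintype n] [DecidableEq n] [LinearOrder n] [CommRing R]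

theorem isUnit_det_one_sub_of_strictLower {B : Matrix n n R} (hB : ∀ i j, i ≤ j → B i j = 0) :
    IsUnit (1 - B).det := by
  have hlower : (1 - B).IsLowerTriangular := fun i j (hij : i < j) => by
    simp [Matrix.one_apply_ne hij.ne, hB i j hij.le]
  simp [Matrix.det_of_isLowerTriangular _ hlower, hB]

theorem inv_one_sub_eq_one_add_mul {B : Matrix n n R} (hB : ∀ i j, i ≤ j → B i j = 0) :
    (1 - B)⁻¹ = 1 + B * (1 - B)⁻¹ := by
  have h := Matrix.mul_nonsing_inv _ (isUnit_det_one_sub_of_strictLower hB)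
  rw [sub_mul, one_mul] at h
  exact eq_add_of_sub_eq h

theorem eq_or_transGen_of_inv_one_sub_apply_ne_zero {B : Matrix n n R}
    (hB : ∀ i j, i ≤ j → B i j = 0) {i k : n} (h : (1 - B)⁻¹ i k ≠ 0) :
    i = k ∨ TransGen (fun a b => B b a ≠ 0) k i := by
  induction i using WellFoundedLT.induction with
  | ind i ih =>
  by_cases hik : i = k
  · exact Or.inl hik
  rw [inv_one_sub_eq_one_add_mul hB, Matrix.add_apply, Matrix.one_apply_ne hik, zero_add,
    Matrix.mul_apply] at h
  obtain ⟨b, -, hb⟩ := Finset.exists_ne_zero_of_sum_ne_zero h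
  have hib : B i b ≠ 0 := left_ne_zero_of_mul hb
  refine Or.inr ?_
  rcases ih b (not_le.mp (mt (hB i b) hib)) (right_ne_zero_of_mul hb) with rfl | hkb
  · exact TransGen.single hib
  · exact hkb.tail hib

theorem inv_one_sub_apply_eq_zero_of_lt {B : Matrix n n R} (hB : ∀ i j, i ≤ j → B i j = 0)
    {i k : n} (hik : i < k) : (1 - B)⁻¹ i k = 0 := by
  by_contra h
  rcases eq_or_transGen_of_inv_one_sub_apply_ne_zero hB h with rfl | hki
  · exact lt_irrefl i hik
  · exact lt_asymm hik (transGen_lt_of_strictLower hB hki)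

theorem inv_one_sub_apply_self {B : Matrix n n R} (hB : ∀ i j, i ≤ j → B i j = 0) (i : n) :
    (1 - B)⁻¹ i i = 1 := by
  rw [inv_one_sub_eq_one_add_mul hB, Matrix.add_apply, Matrix.one_apply_eq, Matrix.mul_apply,
    add_eq_left]
  refine Finset.sum_eq_zero fun b _ => ?_
  rcases lt_or_ge b i with hbi | hib
  · rw [inv_one_sub_apply_eq_zero_of_lt hB hbi, mul_zero]
  · rw [hB i b hib, zero_mul]

theorem inv_one_sub_apply_eq_of_forall_ne {B C : Matrix n n R}
    (hB : ∀ i j, i ≤ j → B i j = 0) (hC : ∀ i j, i ≤ j → C i j = 0) {j : n}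
    (hBC : ∀ a, a ≠ j → B a = C a) (i : n) : (1 - B)⁻¹ i j = (1 - C)⁻¹ i j := by
  have hdiff : (1 - C)⁻¹ - (1 - B)⁻¹ = (1 - B)⁻¹ * (C - B) * (1 - C)⁻¹ := by
    rw [show C - B = (1 - B) - (1 - C) by abel, mul_sub, sub_mul,
      Matrix.nonsing_inv_mul _ (isUnit_det_one_sub_of_strictLower hB), one_mul, mul_assoc,
      Matrix.mul_nonsing_inv _ (isUnit_det_one_sub_of_strictLower hC), mul_one]
  have hcol : ∀ a, ((C - B) * (1 - C)⁻¹) a j = 0 := fun a => by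
    rw [Matrix.mul_apply]
    refine Finset.sum_eq_zero fun b _ => ?_
    rcases lt_or_ge b j with hbj | hjb
    · rw [inv_one_sub_apply_eq_zero_of_lt hC hbj, mul_zero]
    rcases eq_or_ne a j with rfl | haj
    · rw [Matrix.sub_apply, hB a b hjb, hC a b hjb, sub_zero, zero_mul]
    · rw [Matrix.sub_apply, hBC a haj, sub_self, zero_mul]
  have h := congrFun (congrFun hdiff i) j
  rw [Matrix.sub_apply, mul_assoc, Matrix.mul_apply,
    Finset.sum_eq_zero fun a _ => by rw [hcol, mul_zero]] at h
  exact (sub_eq_zero.mp h).symm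

end StrictLowerTriangular

section DeleteEdges

variable {n R : Type*}

/-- Row `a` of a coefficient matrix holds the edges into `a`, so this is the matrix of the
SEM after the intervention `do(Z)`. -/
noncomputable def deleteEdgesInto [Zero R] (A : Matrix n n R) (Z : Set n) : Matrix n n R :=
  Matrix.of fun a b => if a ∈ Z then 0 else A a b

theorem deleteEdgesInto_strictLower [Zero R] [LinearOrder n] {A : Matrix n n R}
    (hA : ∀ i j, i ≤ j → A i j = 0) (Z : Set n) :
    ∀ i j, i ≤ j → deleteEdgesInto A Z i j = 0 := fun i j hij => by
  simp [deleteEdgesInto, hA i j hij]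

theorem ne_zero_of_deleteEdgesInto_ne_zero [Zero R] {A : Matrix n n R} {Z : Set n} {a b : n}
    (h : deleteEdgesInto A Z a b ≠ 0) : A a b ≠ 0 := by
  contrapose! h
  simp [deleteEdgesInto, h]

theorem deleteEdgesInto_diff_singleton_of_ne [Zero R] (A : Matrix n n R) (Z : Set n)
    {a j : n} (haj : a ≠ j) : deleteEdgesInto A (Z \ {j}) a = deleteEdgesInto A Z a := by
  ext b
  simp [deleteEdgesInto, haj]

theorem one_sub_deleteEdgesInto_mulVec [Fintype n] [DecidableEq n] [Ring R]
    {A : Matrix n n R} {x v : n → R} (hx : x = A *ᵥ x + v) (Z : Set n) :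
    (1 - deleteEdgesInto A Z) *ᵥ x = fun k => if k ∈ Z then x k else v k := by
  ext k
  have hrow : (deleteEdgesInto A Z *ᵥ x) k = if k ∈ Z then 0 else (A *ᵥ x) k := by
    split_ifs with hk <;> simp [deleteEdgesInto, Matrix.mulVec, dotProduct, hk]
  rw [Matrix.sub_mulVec, Matrix.one_mulVec, Pi.sub_apply, hrow]
  split_ifs
  · exact sub_zero _
  · exact sub_eq_iff_eq_add'.mpr (congrFun hx k)

end DeleteEdges

section ControlledEffect

variable {N : ℕ} {A : Matrix (Fin N) (Fin N) ℝ}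

theorem ctrlEffect_self (hA : ∀ i j, i ≤ j → A i j = 0) (Z : Set (Fin N)) (i : Fin N) :
    ctrlEffect A Z i i = 1 :=
  inv_one_sub_apply_self (deleteEdgesInto_strictLower hA Z) i

theorem ctrlEffect_eq_zero_of_not_transGen (hA : ∀ i j, i ≤ j → A i j = 0) (Z : Set (Fin N))
    {i k : Fin N} (hki : k ≠ i) (hanc : ¬TransGen (fun a b => A b a ≠ 0) k i) :
    ctrlEffect A Z i k = 0 := by
  by_contra h
  rcases eq_or_transGen_of_inv_one_sub_apply_ne_zero (deleteEdgesInto_strictLower hA Z) h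
    with rfl | hpath
  · exact hki rfl
  · exact hanc (TransGen.mono (fun _ _ => ne_zero_of_deleteEdgesInto_ne_zero) _ _ hpath)

theorem ctrlEffect_diff_singleton (hA : ∀ i j, i ≤ j → A i j = 0) (Z : Set (Fin N))
    (i j : Fin N) : ctrlEffect A (Z \ {j}) i j = ctrlEffect A Z i j :=
  inv_one_sub_apply_eq_of_forall_ne (deleteEdgesInto_strictLower hA _)
    (deleteEdgesInto_strictLower hA Z) (fun _ => deleteEdgesInto_diff_singleton_of_ne A Z) i

theorem apply_eq_sum_ctrlEffect_mul (hA : ∀ i j, i ≤ j → A i j = 0) {x v : Fin N → ℝ}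
    (hx : x = A *ᵥ x + v) (Z : Set (Fin N)) (i : Fin N) :
    x i = ∑ k, ctrlEffect A Z i k * (if k ∈ Z then x k else v k) := by
  have hunit := isUnit_det_one_sub_of_strictLower (deleteEdgesInto_strictLower hA Z)
  conv_lhs => rw [← Matrix.one_mulVec x, ← Matrix.nonsing_inv_mul _ hunit,
    ← Matrix.mulVec_mulVec, one_sub_deleteEdgesInto_mulVec hx]
  rfl

end ControlledEffect

/-- ancestral expansion: in the linear SEM `X = AX + u` with `A` strictly
lower triangular, for any `S ⊆ V \ {i}`,
`X i = Σ_{j∈S} τ_{ij|do(S\{j})} X j + Σ_{k∈AN(i)\S} τ_{ik|do(S)} u k + u i`. -/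
theorem ancestral_expansion
    {Ω : Type*} {N : ℕ} (A : Matrix (Fin N) (Fin N) ℝ)
    (hA : ∀ i j : Fin N, i ≤ j → A i j = 0)
    (u X : Ω → Fin N → ℝ)
    (hSEM : ∀ ω, X ω = A.mulVec (X ω) + u ω)
    (Anc : Fin N → Fin N → Prop)
    (hAnc : Anc = Relation.TransGen fun a b => A b a ≠ 0)
    (S : Set (Fin N)) (i : Fin N) (hiS : i ∉ S) :
    ∀ ω, X ω i =
      (∑ j, if j ∈ S then ctrlEffect A (S \ {j}) i j * X ω j else 0)
      + (∑ k, if Anc k i ∧ k ∉ S then ctrlEffect A S i k * u ω k else 0)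
      + u ω i := by
  subst hAnc
  intro ω
  rw [apply_eq_sum_ctrlEffect_mul hA (hSEM ω) S i, ← Fintype.sum_ite_eq' i (u ω),
    ← Finset.sum_add_distrib, ← Finset.sum_add_distrib]
  refine Finset.sum_congr rfl fun k _ => ?_
  by_cases hk : k ∈ S
  · have hki : k ≠ i := fun h => hiS (h ▸ hk)
    simp [hk, hki, ctrlEffect_diff_singleton hA]
  by_cases hki : k = i
  · subst hki
    have hirrefl : ¬TransGen (fun a b => A b a ≠ 0) k k := fun h =>
      lt_irrefl k (transGen_lt_of_strictLower hA h)
    simp [hk, hirrefl, ctrlEffect_self hA]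
  by_cases hanc : TransGen (fun a b => A b a ≠ 0) k i
  · simp [hk, hki, hanc]
  · simp [hk, hki, hanc, ctrlEffect_eq_zero_of_not_transGen hA S hki hanc]
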